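/- Consider the two-player one-dimensional Battling Influencers Game with action set 𝒳 = [a,b] (a < b), receiver x̂ = (x_1 + x_2)/2, and targets satisfying t_1 < (a+b)/2 and t_2 > (a+b)/2, where player i's loss is ℓ_i(x_1,x_2) = ((x_1+x_2)/2 − t_i)². Then (x_1, x_2) = (a, b) is the unique pure Nash equilibrium: it is a pure Nash equilibrium, and every pure Nash equilibrium equals (a, b). -/

import Mathlib

noncomputable section

/-- Player `i`'s loss in the two-player one-dimensional Battling Influencers
Game with receiver `x̂ = (x₁ + x₂)/2` and target `t`:
`ℓ(x₁, x₂) = ((x₁ + x₂)/2 − t)²`. -/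
def loss1D (t x1 x2 : ℝ) : ℝ := ((x1 + x2) / 2 - t) ^ 2

/-- `(x₁, x₂)` is a pure Nash equilibrium of the two-player one-dimensional
Battling Influencers Game on `𝒳 = [a, b]` with targets `t₁, t₂`. -/
def IsPureNE1D (a b t1 t2 x1 x2 : ℝ) : Prop :=
  x1 ∈ Set.Icc a b ∧ x2 ∈ Set.Icc a b ∧
    (∀ y ∈ Set.Icc a b, loss1D t1 x1 x2 ≤ loss1D t1 y x2) ∧
    (∀ y ∈ Set.Icc a b, loss1D t2 x1 x2 ≤ loss1D t2 x1 y)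

/-! Player `i`'s loss depends only on `x₁ + x₂` and is strictly monotone on either side of
`2tᵢ`, so a best response can lie strictly inside `[a, b]` only on the correct side of its
target. If player 1 left `a`, then `x₁ + x₂ ≤ 2t₁ < a + b` forces `x₂ < b`, hence also
`2t₂ ≤ x₁ + x₂`, contradicting `t₁ < t₂`; with `x₁ = a`, player 2 leaving `b` would need
`2t₂ ≤ a + x₂ < a + b`. -/

open Set

lemma loss1D_comm (t x y : ℝ) : loss1D t x y = loss1D t y x := by
  rw [loss1D, loss1D, add_comm]

lemma isPureNE1D_iff {a b t1 t2 x1 x2 : ℝ} :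
    IsPureNE1D a b t1 t2 x1 x2 ↔
      x1 ∈ Icc a b ∧ x2 ∈ Icc a b ∧
        IsMinOn (loss1D t1 · x2) (Icc a b) x1 ∧ IsMinOn (loss1D t2 · x1) (Icc a b) x2 := by
  simp only [IsPureNE1D, isMinOn_iff, loss1D_comm t2 x1]

lemma strictMonoOn_loss1D (t c : ℝ) : StrictMonoOn (loss1D t · c) (Ici (2 * t - c)) := by
  intro x hx y _ hxy
  rw [mem_Ici] at hx
  exact pow_lt_pow_left₀ (by linarith) (by linarith) two_ne_zero

lemma strictAntiOn_loss1D (t c : ℝ) : StrictAntiOn (loss1D t · c) (Iic (2 * t - c)) := by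
  intro x _ y hy hxy
  rw [mem_Iic] at hy
  dsimp only [loss1D]
  rw [← neg_sq, ← neg_sq ((x + c) / 2 - t)]
  exact pow_lt_pow_left₀ (by linarith) (by linarith) two_ne_zero

lemma isMinOn_loss1D_left {a b t c : ℝ} (h : 2 * t ≤ a + c) :
    IsMinOn (loss1D t · c) (Icc a b) a :=
  isMinOn_iff.2 fun _ hy ↦
    (strictMonoOn_loss1D t c).monotoneOn (mem_Ici.2 (by linarith))
      (mem_Ici.2 (by linarith [hy.1])) hy.1

lemma isMinOn_loss1D_right {a b t c : ℝ} (h : b + c ≤ 2 * t) :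
    IsMinOn (loss1D t · c) (Icc a b) b :=
  isMinOn_iff.2 fun _ hy ↦
    (strictAntiOn_loss1D t c).antitoneOn (mem_Iic.2 (by linarith [hy.2]))
      (mem_Iic.2 (by linarith)) hy.2

lemma add_le_two_mul_of_isMinOn_loss1D {a b t c x : ℝ} (hax : a < x) (hxb : x ≤ b)
    (hmin : IsMinOn (loss1D t · c) (Icc a b) x) : x + c ≤ 2 * t := by
  by_contra! hgt
  have hy : max a (2 * t - c) ∈ Icc a b :=
    ⟨le_max_left _ _, max_le (hax.le.trans hxb) (by linarith)⟩
  have hyx : max a (2 * t - c) < x := max_lt hax (by linarith)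
  exact (strictMonoOn_loss1D t c (mem_Ici.2 (le_max_right _ _)) (mem_Ici.2 (by linarith))
    hyx).not_ge (isMinOn_iff.1 hmin _ hy)

lemma two_mul_le_add_of_isMinOn_loss1D {a b t c x : ℝ} (hax : a ≤ x) (hxb : x < b)
    (hmin : IsMinOn (loss1D t · c) (Icc a b) x) : 2 * t ≤ x + c := by
  by_contra! hlt
  have hy : min b (2 * t - c) ∈ Icc a b :=
    ⟨le_min (hax.trans hxb.le) (by linarith), min_le_left _ _⟩
  have hxy : x < min b (2 * t - c) := lt_min hxb (by linarith)
  exact (strictAntiOn_loss1D t c (mem_Iic.2 (by linarith)) (mem_Iic.2 (min_le_right _ _))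
    hxy).not_ge (isMinOn_iff.1 hmin _ hy)

/-- With `a < b`, `t₁ < (a+b)/2 < t₂`, the pair `(a, b)` is the unique pure Nash
equilibrium of the two-player one-dimensional Battling Influencers Game:
both players maximally exaggerate. -/
theorem opposite_targets_unique_pNE (a b t1 t2 : ℝ) (hab : a < b)
    (ht1 : t1 < (a + b) / 2) (ht2 : (a + b) / 2 < t2) :
    IsPureNE1D a b t1 t2 a b ∧
      ∀ x1 x2 : ℝ, IsPureNE1D a b t1 t2 x1 x2 → x1 = a ∧ x2 = b := by
  refine ⟨?_, fun x1 x2 hNE ↦ ?_⟩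
  · exact isPureNE1D_iff.2 ⟨left_mem_Icc.2 hab.le, right_mem_Icc.2 hab.le,
      isMinOn_loss1D_left (by linarith), isMinOn_loss1D_right (by linarith)⟩
  obtain ⟨hx1, hx2, hmin1, hmin2⟩ := isPureNE1D_iff.1 hNE
  have hx1a : x1 = a := by
    by_contra hne
    have h1 := add_le_two_mul_of_isMinOn_loss1D (hx1.1.lt_of_ne' hne) hx1.2 hmin1
    have h2 := two_mul_le_add_of_isMinOn_loss1D hx2.1 (by linarith [hx1.1]) hmin2
    linarith
  subst x1
  refine ⟨rfl, ?_⟩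
  by_contra hne
  have h2 := two_mul_le_add_of_isMinOn_loss1D hx2.1 (hx2.2.lt_of_ne hne) hmin2
  linarith [hx2.2]

end
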